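/- Let v solve (|v'|^(p-2)v')' + h(t) f(v) = 0 on [ε₀, d] where p > 1, h > 0 is C¹ with h' < 0, and F (the primitive of f with F(0)=0) satisfies F ≥ -F₀ for some F₀ > 0. Then for all t ∈ [ε₀, d], |v'(t)|^p ≤ |v'(ε₀)|^p + (p/(p-1)) h(ε₀)(F(v(ε₀)) + F₀); i.e., v' is a priori bounded on [ε₀, d] by a constant depending only on the data at ε₀. -/

import Mathlib

/-!
Along a solution the energy `E = ((p-1)/p)|v'|^p + h (F(v) + F₀)` satisfies `E' = h' (F(v) + F₀) ≤ 0`,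
so `E` decreases from `ε₀`. Since `h > 0` and `F ≥ -F₀`, the second term of `E` is nonnegative,
which bounds `((p-1)/p)|v'(t)|^p` by `E(ε₀)`.

The ODE only says that `φ(v') = |v'|^(p-2) v'` is differentiable, not `v'` itself. The derivative
of `|v'|^p` comes from writing it as `|φ(v')|^q` with the conjugate exponent `q = p/(p-1)`:
`φ` and `a ↦ |a|^(q-2) a` are inverse to each other.
-/

section PLaplace

variable {p : ℝ}

lemma abs_abs_rpow_sub_two_mul (hp : p ≠ 1) (a : ℝ) :
    |(|a| ^ (p - 2) * a)| = |a| ^ (p - 1) := by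
  rcases eq_or_ne a 0 with rfl | ha
  · simp [Real.zero_rpow (sub_ne_zero.mpr hp)]
  · rw [abs_mul, abs_of_nonneg (Real.rpow_nonneg (abs_nonneg a) _),
      ← Real.rpow_add_one (abs_pos.mpr ha).ne']
    ring_nf

lemma abs_abs_rpow_sub_two_mul_rpow_conjExponent (hp : p ≠ 1) (a : ℝ) :
    |(|a| ^ (p - 2) * a)| ^ (p / (p - 1)) = |a| ^ p := by
  rw [abs_abs_rpow_sub_two_mul hp, ← Real.rpow_mul (abs_nonneg a),
    mul_div_cancel₀ _ (sub_ne_zero.mpr hp)]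

lemma abs_rpow_conjExponent_sub_two_mul_abs_rpow_sub_two_mul (hp : p ≠ 1) (a : ℝ) :
    |(|a| ^ (p - 2) * a)| ^ (p / (p - 1) - 2) * (|a| ^ (p - 2) * a) = a := by
  rcases eq_or_ne a 0 with rfl | ha
  · simp
  · have hp1 : p - 1 ≠ 0 := sub_ne_zero.mpr hp
    have hexp : (p - 1) * (p / (p - 1) - 2) + (p - 2) = 0 := by field_simp; ring
    rw [abs_abs_rpow_sub_two_mul hp, ← Real.rpow_mul (abs_nonneg a), ← mul_assoc,
      ← Real.rpow_add (abs_pos.mpr ha), hexp, Real.rpow_zero, one_mul]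

lemma HasDerivAt.abs_rpow_of_abs_rpow_sub_two_mul (hp : 1 < p) {a : ℝ → ℝ} {b t : ℝ}
    (ha : HasDerivAt (fun s => |a s| ^ (p - 2) * a s) b t) :
    HasDerivAt (fun s => |a s| ^ p) (p / (p - 1) * a t * b) t := by
  have hq : 1 < p / (p - 1) := by
    rw [lt_div_iff₀ (by linarith)]
    linarith
  have hcomp := (hasDerivAt_abs_rpow _ hq).comp t ha
  simp only [Function.comp_def, abs_abs_rpow_sub_two_mul_rpow_conjExponent hp.ne'] at hcomp
  rwa [mul_assoc _ _ (|a t| ^ (p - 2) * a t),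
    abs_rpow_conjExponent_sub_two_mul_abs_rpow_sub_two_mul hp.ne'] at hcomp

end PLaplace

section Energy

variable {p c : ℝ} {h F v v' : ℝ → ℝ}

lemma hasDerivAt_pLaplace_energy (hp : 1 < p) {t dh y : ℝ}
    (hh : HasDerivAt h dh t) (hF : HasDerivAt F y (v t)) (hv : HasDerivAt v (v' t) t)
    (hode : HasDerivAt (fun s => |v' s| ^ (p - 2) * v' s) (-(h t * y)) t) :
    HasDerivAt (fun s => (p - 1) / p * |v' s| ^ p + h s * (F (v s) + c))
      (dh * (F (v t) + c)) t := by
  have hkin := (hode.abs_rpow_of_abs_rpow_sub_two_mul hp).const_mul ((p - 1) / p)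
  have hpot := hh.mul ((hF.comp t hv).add_const c)
  refine (hkin.add hpot).congr_deriv ?_
  have hp0 : p ≠ 0 := by linarith
  have hp1 : p - 1 ≠ 0 := by linarith
  simp only [Function.comp_apply]
  field_simp
  ring

lemma antitoneOn_pLaplace_energy (hp : 1 < p) {a b : ℝ} {h' f : ℝ → ℝ}
    (hh : ∀ t ∈ Set.Icc a b, HasDerivAt h (h' t) t)
    (hh'nonpos : ∀ t ∈ Set.Icc a b, h' t ≤ 0)
    (hF : ∀ x, HasDerivAt F (f x) x) (hFc : ∀ x, 0 ≤ F x + c)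
    (hv : ∀ t ∈ Set.Icc a b, HasDerivAt v (v' t) t)
    (hode : ∀ t ∈ Set.Icc a b,
      HasDerivAt (fun s => |v' s| ^ (p - 2) * v' s) (-(h t * f (v t))) t) :
    AntitoneOn (fun s => (p - 1) / p * |v' s| ^ p + h s * (F (v s) + c)) (Set.Icc a b) := by
  have hE t (ht : t ∈ Set.Icc a b) :=
    hasDerivAt_pLaplace_energy (c := c) hp (hh t ht) (hF (v t)) (hv t ht) (hode t ht)
  refine antitoneOn_of_hasDerivWithinAt_nonpos (convex_Icc a b)
    (fun t ht => (hE t ht).continuousAt.continuousWithinAt)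
    (fun t ht => (hE t (interior_subset ht)).hasDerivWithinAt) fun t ht => ?_
  exact mul_nonpos_of_nonpos_of_nonneg (hh'nonpos t (interior_subset ht)) (hFc _)

end Energy

theorem stmt_18_general (p ε₀ d F₀ : ℝ) (h h' f F v v' : ℝ → ℝ)
    (hp : 1 < p)
    (hh : ∀ t ∈ Set.Icc ε₀ d, HasDerivAt h (h' t) t)
    (hhpos : ∀ t ∈ Set.Icc ε₀ d, 0 < h t)
    (hh'neg : ∀ t ∈ Set.Icc ε₀ d, h' t < 0)
    (hF : ∀ x : ℝ, HasDerivAt F (f x) x)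
    (hFlb : ∀ u : ℝ, -F₀ ≤ F u)
    (hv : ∀ t ∈ Set.Icc ε₀ d, HasDerivAt v (v' t) t)
    (hode : ∀ t ∈ Set.Icc ε₀ d,
      HasDerivAt (fun s => |v' s| ^ (p - 2) * v' s) (-(h t * f (v t))) t) :
    ∀ t ∈ Set.Icc ε₀ d,
      |v' t| ^ p ≤ |v' ε₀| ^ p + p / (p - 1) * h ε₀ * (F (v ε₀) + F₀) := by
  intro t ht
  have hFF₀ (u : ℝ) : 0 ≤ F u + F₀ := by linarith [hFlb u]
  have hdecay := antitoneOn_pLaplace_energy hp hh (fun s hs => (hh'neg s hs).le) hF hFF₀ hv hode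
    ⟨le_rfl, ht.1.trans ht.2⟩ ht ht.1
  have hpot : 0 ≤ h t * (F (v t) + F₀) := mul_nonneg (hhpos t ht).le (hFF₀ _)
  have hkin : (p - 1) / p * |v' t| ^ p ≤ (p - 1) / p * |v' ε₀| ^ p + h ε₀ * (F (v ε₀) + F₀) := by
    simp only at hdecay
    linarith
  have hp0 : 0 < p := by linarith
  have hp1 : 0 < p - 1 := by linarith
  calc |v' t| ^ p = p / (p - 1) * ((p - 1) / p * |v' t| ^ p) := by field_simp
    _ ≤ p / (p - 1) * ((p - 1) / p * |v' ε₀| ^ p + h ε₀ * (F (v ε₀) + F₀)) := by gcongr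
    _ = |v' ε₀| ^ p + p / (p - 1) * h ε₀ * (F (v ε₀) + F₀) := by field_simp

theorem stmt_18 (p ε₀ d F₀ : ℝ) (h h' f F v v' : ℝ → ℝ)
    (hp : 1 < p) (hεd : ε₀ < d) (hε₀ : 0 < ε₀) (hF₀ : 0 < F₀)
    (hh : ∀ t ∈ Set.Icc ε₀ d, HasDerivAt h (h' t) t)
    (hhpos : ∀ t ∈ Set.Icc ε₀ d, 0 < h t)
    (hh'neg : ∀ t ∈ Set.Icc ε₀ d, h' t < 0)
    (hF : ∀ x : ℝ, HasDerivAt F (f x) x) (hF0 : F 0 = 0)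
    (hFlb : ∀ u : ℝ, -F₀ ≤ F u)
    (hv : ∀ t ∈ Set.Icc ε₀ d, HasDerivAt v (v' t) t)
    (hode : ∀ t ∈ Set.Icc ε₀ d,
      HasDerivAt (fun s => |v' s| ^ (p - 2) * v' s) (-(h t * f (v t))) t) :
    ∀ t ∈ Set.Icc ε₀ d,
      |v' t| ^ p ≤ |v' ε₀| ^ p + p / (p - 1) * h ε₀ * (F (v ε₀) + F₀) :=
  stmt_18_general p ε₀ d F₀ h h' f F v v' hp hh hhpos hh'neg hF hFlb hv hode
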